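/- If two endomorphisms of finitely generated free abelian groups (equivalently, integer square matrices) φ and ψ are shift equivalent, then tr(φ^n) = tr(ψ^n) for all n ≥ 1. -/

import Mathlib

/-!
Over a field, the Fitting decomposition `V = ker f^N ⊕ range f^N` (for `N` large) splits `f` into
a nilpotent part, which contributes nothing to the trace of `f^n` for `n ≥ 1`, and the restriction
of `f` to its eventual range `⋂ₘ range f^m`, on which `f` is invertible. The relations
`r f = g r`, `r s = g^k` and `s r = f^k` make `r` an isomorphism between the eventual ranges of
`f` and `g` that conjugates the two restrictions. Over a domain such as `ℤ`, base change to the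
fraction field reduces to this case.
-/

open LinearMap Filter Module

namespace Module.End

section Semiring

variable {R M : Type*} [Semiring R] [AddCommMonoid M] [Module R M]

def eventualRange (f : End R M) : Submodule R M := ⨅ m, range (f ^ m)

lemma eventually_range_pow_eq_eventualRange [IsArtinian R M] (f : End R M) :
    ∀ᶠ m in atTop, range (f ^ m) = f.eventualRange :=
  f.eventually_iInf_range_pow_eq.mono fun _ h ↦ h.symm

lemma mapsTo_eventualRange (f : End R M) : ∀ x ∈ f.eventualRange, f x ∈ f.eventualRange := by
  simp only [eventualRange, Submodule.mem_iInf, mem_range]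
  intro x hx m
  obtain ⟨y, rfl⟩ := hx m
  exact ⟨f y, by rw [← mul_apply, ← pow_succ, pow_succ', mul_apply]⟩

def restrictEventualRange (f : End R M) : End R f.eventualRange :=
  f.restrict f.mapsTo_eventualRange

end Semiring

variable {K V W : Type*} [Field K]
  [AddCommGroup V] [Module K V] [FiniteDimensional K V]
  [AddCommGroup W] [Module K W]

lemma trace_eq_trace_restrict_of_isCompl_of_isNilpotent {f : End K V} {p q : Submodule K V}
    (hpq : IsCompl p q) (hp : ∀ x ∈ p, f x ∈ p) (hq : ∀ x ∈ q, f x ∈ q)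
    (hnil : IsNilpotent (f.restrict hp)) :
    trace K V f = trace K q (f.restrict hq) := by
  have hint : DirectSum.IsInternal (fun i : Bool ↦ cond i p q) :=
    (DirectSum.isInternal_submodule_iff_isCompl _ (i := true) (j := false) (by decide)
      (by ext; simp)).mpr hpq
  have hmaps : ∀ i : Bool,
      Set.MapsTo f (cond i p q : Submodule K V) (cond i p q : Submodule K V) := by
    rintro (_ | _)
    exacts [hq, hp]
  rw [trace_eq_sum_trace_restrict hint hmaps, Fintype.sum_bool]
  exact add_eq_right.mpr (isNilpotent_trace_of_isNilpotent hnil).eq_zero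

lemma bijective_restrictEventualRange (f : End K V) :
    Function.Bijective f.restrictEventualRange := by
  suffices Function.Surjective f.restrictEventualRange from
    ⟨injective_iff_surjective.mpr this, this⟩
  obtain ⟨M, hM, hM'⟩ := ((tendsto_add_atTop_nat 1).eventually
    f.eventually_range_pow_eq_eventualRange).and f.eventually_range_pow_eq_eventualRange |>.exists
  rintro ⟨y, hy⟩
  rw [← hM] at hy
  obtain ⟨z, rfl⟩ := hy
  have hz : (f ^ M) z ∈ f.eventualRange := hM' ▸ mem_range_self _ z
  exact ⟨⟨_, hz⟩, Subtype.ext (by simp [restrictEventualRange, pow_succ'])⟩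

lemma trace_pow_eq_trace_pow_restrictEventualRange (f : End K V) {n : ℕ} (hn : n ≠ 0) :
    trace K V (f ^ n) = trace K f.eventualRange (f.restrictEventualRange ^ n) := by
  obtain ⟨M, hcompl, hrange⟩ := (f.eventually_isCompl_ker_pow_range_pow.and
    f.eventually_range_pow_eq_eventualRange).exists
  rw [hrange] at hcompl
  have hker : ∀ x ∈ (f ^ M).ker, (f ^ n) x ∈ (f ^ M).ker := fun x hx ↦ by
    rw [LinearMap.mem_ker, ← mul_apply, ← pow_add, add_comm, pow_add, mul_apply, hx, map_zero]
  have hnil : IsNilpotent ((f ^ n).restrict hker) := ⟨M, by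
    ext ⟨x, hx⟩
    rw [LinearMap.zero_apply, ZeroMemClass.coe_zero, ZeroMemClass.coe_eq_zero, pow_restrict,
      restrict_apply, Subtype.mk_eq_mk, ← pow_mul]
    exact pow_map_zero_of_le (Nat.le_mul_of_pos_left M (Nat.pos_of_ne_zero hn)) hx⟩
  rw [trace_eq_trace_restrict_of_isCompl_of_isNilpotent hcompl hker _ hnil,
    restrictEventualRange, pow_restrict]

section Intertwining

variable {f : End K V} {g : End K W} {r : V →ₗ[K] W} {s : W →ₗ[K] V} {k : ℕ}

lemma disjoint_eventualRange_ker_of_comp_eq_pow (h4 : s ∘ₗ r = f ^ k) :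
    Disjoint f.eventualRange (ker r) := by
  rw [Submodule.disjoint_def]
  intro x hx hrx
  have hinj : Function.Injective (f.restrictEventualRange ^ k) := by
    rw [coe_pow]
    exact f.bijective_restrictEventualRange.1.iterate k
  have hzero : (f.restrictEventualRange ^ k) ⟨x, hx⟩ = (f.restrictEventualRange ^ k) 0 := by
    rw [restrictEventualRange, pow_restrict, map_zero]
    exact Subtype.ext (by simp [← h4, LinearMap.mem_ker.mp hrx])
  exact congrArg Subtype.val (hinj hzero)

variable [FiniteDimensional K W]

lemma map_eventualRange_eq_of_comp_eq (h1 : r ∘ₗ f = g ∘ₗ r) (h3 : r ∘ₗ s = g ^ k) :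
    f.eventualRange.map r = g.eventualRange := by
  obtain ⟨M, hf, hg, hgk⟩ := (f.eventually_range_pow_eq_eventualRange.and
    (g.eventually_range_pow_eq_eventualRange.and
      ((tendsto_add_atTop_nat k).eventually g.eventually_range_pow_eq_eventualRange))).exists
  have hcomm : (g ^ M) ∘ₗ r = r ∘ₗ f ^ M := commute_pow_left_of_commute h1.symm M
  rw [← hf, ← range_comp, ← hcomm]
  refine le_antisymm ((range_comp_le_range _ _).trans hg.le) ?_
  calc g.eventualRange = range (g ^ (M + k)) := hgk.symm
    _ = range (((g ^ M) ∘ₗ r) ∘ₗ s) := by rw [pow_add, mul_eq_comp, ← h3, comp_assoc]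
    _ ≤ range ((g ^ M) ∘ₗ r) := range_comp_le_range _ _

lemma exists_conjAlgEquiv_restrictEventualRange_eq (h1 : r ∘ₗ f = g ∘ₗ r)
    (h3 : r ∘ₗ s = g ^ k) (h4 : s ∘ₗ r = f ^ k) :
    ∃ e : f.eventualRange ≃ₗ[K] g.eventualRange,
      e.conjAlgEquiv K f.restrictEventualRange = g.restrictEventualRange := by
  have hmap := map_eventualRange_eq_of_comp_eq h1 h3
  have hr : ∀ x ∈ f.eventualRange, r x ∈ g.eventualRange :=
    fun x hx ↦ hmap ▸ Submodule.mem_map_of_mem hx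
  have hinj : Function.Injective (r.restrict hr) :=
    (injective_restrict_iff hr).mpr (disjoint_eventualRange_ker_of_comp_eq_pow h4)
  have hsurj : Function.Surjective (r.restrict hr) := by
    rintro ⟨y, hy⟩
    obtain ⟨x, hx, rfl⟩ := Submodule.mem_map.mp (hmap ▸ hy)
    exact ⟨⟨x, hx⟩, rfl⟩
  have hbij : Function.Bijective (r.restrict hr) := ⟨hinj, hsurj⟩
  refine ⟨.ofBijective _ hbij, ?_⟩
  rw [LinearEquiv.conjAlgEquiv_apply, ← comp_assoc, LinearEquiv.comp_toLinearMap_symm_eq]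
  ext x
  exact congr($h1 x)

end Intertwining

theorem trace_pow_eq_of_comp_eq {R M N : Type*} [CommRing R] [IsDomain R]
    [AddCommGroup M] [Module R M] [Module.Free R M] [Module.Finite R M]
    [AddCommGroup N] [Module R N] [Module.Free R N] [Module.Finite R N]
    {f : End R M} {g : End R N} {r : M →ₗ[R] N} {s : N →ₗ[R] M} {k : ℕ}
    (h1 : r ∘ₗ f = g ∘ₗ r) (h3 : r ∘ₗ s = g ^ k) (h4 : s ∘ₗ r = f ^ k) {n : ℕ} (hn : n ≠ 0) :
    trace R M (f ^ n) = trace R N (g ^ n) := by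
  let K := FractionRing R
  apply IsFractionRing.injective R K
  rw [← trace_baseChange, ← trace_baseChange, baseChange_pow, baseChange_pow]
  obtain ⟨e, he⟩ := exists_conjAlgEquiv_restrictEventualRange_eq (K := K) (s := s.baseChange K)
    (k := k) (by rw [← baseChange_comp, h1, baseChange_comp])
    (by rw [← baseChange_comp, h3, baseChange_pow]) (by rw [← baseChange_comp, h4, baseChange_pow])
  rw [trace_pow_eq_trace_pow_restrictEventualRange _ hn,
    trace_pow_eq_trace_pow_restrictEventualRange _ hn, ← he, ← map_pow]
  exact (trace_conj' (M := eventualRange (f.baseChange K)) (N := eventualRange (g.baseChange K))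
    _ e).symm

end Module.End

theorem trace_pow_eq_of_shiftEquivalent_general (a b : ℕ)
    (φ : Module.End ℤ (Fin a → ℤ)) (ψ : Module.End ℤ (Fin b → ℤ))
    (r : (Fin a → ℤ) →ₗ[ℤ] (Fin b → ℤ)) (s : (Fin b → ℤ) →ₗ[ℤ] (Fin a → ℤ))
    (k : ℕ)
    (h1 : r ∘ₗ (φ : (Fin a → ℤ) →ₗ[ℤ] (Fin a → ℤ)) = (ψ : (Fin b → ℤ) →ₗ[ℤ] (Fin b → ℤ)) ∘ₗ r)
    (h3 : r ∘ₗ s = (ψ ^ k : Module.End ℤ (Fin b → ℤ)))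
    (h4 : s ∘ₗ r = (φ ^ k : Module.End ℤ (Fin a → ℤ))) :
    ∀ n : ℕ, 1 ≤ n →
      LinearMap.trace ℤ (Fin a → ℤ) (φ ^ n) = LinearMap.trace ℤ (Fin b → ℤ) (ψ ^ n) :=
  fun _ hn ↦ Module.End.trace_pow_eq_of_comp_eq h1 h3 h4 (Nat.one_le_iff_ne_zero.mp hn)

/-- Shift equivalent endomorphisms of finitely generated free abelian groups
(integer matrices) have equal traces of all positive powers. -/
theorem trace_pow_eq_of_shiftEquivalent (a b : ℕ)
    (φ : Module.End ℤ (Fin a → ℤ)) (ψ : Module.End ℤ (Fin b → ℤ))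
    (r : (Fin a → ℤ) →ₗ[ℤ] (Fin b → ℤ)) (s : (Fin b → ℤ) →ₗ[ℤ] (Fin a → ℤ))
    (k : ℕ) (hk : 1 ≤ k)
    (h1 : r ∘ₗ (φ : (Fin a → ℤ) →ₗ[ℤ] (Fin a → ℤ)) = (ψ : (Fin b → ℤ) →ₗ[ℤ] (Fin b → ℤ)) ∘ₗ r)
    (h2 : s ∘ₗ (ψ : (Fin b → ℤ) →ₗ[ℤ] (Fin b → ℤ)) = (φ : (Fin a → ℤ) →ₗ[ℤ] (Fin a → ℤ)) ∘ₗ s)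
    (h3 : r ∘ₗ s = (ψ ^ k : Module.End ℤ (Fin b → ℤ)))
    (h4 : s ∘ₗ r = (φ ^ k : Module.End ℤ (Fin a → ℤ))) :
    ∀ n : ℕ, 1 ≤ n →
      LinearMap.trace ℤ (Fin a → ℤ) (φ ^ n) = LinearMap.trace ℤ (Fin b → ℤ) (ψ ^ n) :=
  trace_pow_eq_of_shiftEquivalent_general a b φ ψ r s k h1 h3 h4
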